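/- arXiv:1905.05339 — 2 statements merged into one kernel-verified Lean document; each statement's English description precedes it below -/
import Mathlib

section
/- Let f : 2^Ω → ℝ≥0 be monotone submodular and let F be its multilinear extension. Then for any x ∈ [0,1]^Ω and any set V ⊆ Ω, f(V) ≤ F(x) + Σ_{e∈V} F(e|x), where F(e|x) = F(x ∨ 1_e) − F(x). -/
def MonotoneSet {Ω : Type*} [DecidableEq Ω] (g : Finset Ω → ℝ) : Prop :=
  ∀ A B : Finset Ω, A ⊆ B → g A ≤ g B

def Submodular {Ω : Type*} [DecidableEq Ω] (g : Finset Ω → ℝ) : Prop :=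
  ∀ A B : Finset Ω, ∀ v : Ω, A ⊆ B → v ∉ B →
    g (insert v B) - g B ≤ g (insert v A) - g A

/-- The multilinear extension of a set function. -/
noncomputable def mlext {Ω : Type*} [Fintype Ω] [DecidableEq Ω]
    (f : Finset Ω → ℝ) (x : Ω → ℝ) : ℝ :=
  ∑ X : Finset Ω, f X * ((∏ i ∈ X, x i) * ∏ i ∈ Xᶜ, (1 - x i))

/-- The indicator vector of `{e}` joined into `x`: componentwise max `x ∨ 1_e`. -/
noncomputable def joinOne {Ω : Type*} [DecidableEq Ω] (x : Ω → ℝ) (e : Ω) : Ω → ℝ :=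
  fun i => max (x i) (if i = e then 1 else 0)

/-- The marginal `F(e|x) = F(x ∨ 1_e) − F(x)`. -/
noncomputable def mlmarg {Ω : Type*} [Fintype Ω] [DecidableEq Ω]
    (f : Finset Ω → ℝ) (x : Ω → ℝ) (e : Ω) : ℝ :=
  mlext f (joinOne x e) - mlext f x

namespace MLAux

variable {Ω : Type*} [Fintype Ω] [DecidableEq Ω]

noncomputable def P (x : Ω → ℝ) (X : Finset Ω) : ℝ :=
  (∏ i ∈ X, x i) * ∏ i ∈ Xᶜ, (1 - x i)

lemma P_nonneg (x : Ω → ℝ) (hx : ∀ i, x i ∈ Set.Icc (0:ℝ) 1) (X : Finset Ω) : 0 ≤ P x X :=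
  mul_nonneg (Finset.prod_nonneg fun i _ => (hx i).1)
    (Finset.prod_nonneg fun i _ => by linarith [(hx i).2])

lemma P_sum (x : Ω → ℝ) : ∑ X : Finset Ω, P x X = 1 := by
  have h := Finset.prod_add x (fun i => 1 - x i) Finset.univ
  have h1 : ∏ i ∈ Finset.univ, (x i + (1 - x i)) = 1 := by simp
  rw [h1] at h
  rw [h, Finset.powerset_univ]
  apply Finset.sum_congr rfl
  intro X _
  unfold P
  rw [← Finset.compl_eq_univ_sdiff]

lemma compl_erase' (e : Ω) (S : Finset Ω) : (S.erase e)ᶜ = insert e Sᶜ := by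
  ext i
  simp [Finset.mem_erase, Finset.mem_insert, or_iff_not_imp_left]

lemma P_add_erase (x : Ω → ℝ) (e : Ω) (S : Finset Ω) (he : e ∈ S) :
    P x S + P x (S.erase e) = (∏ i ∈ S.erase e, x i) * ∏ i ∈ Sᶜ, (1 - x i) := by
  unfold P
  rw [← Finset.mul_prod_erase S x he, compl_erase' e S,
    Finset.prod_insert (by simp [he])]
  ring

lemma mlext_eq_P (f : Finset Ω → ℝ) (x : Ω → ℝ) :
    mlext f x = ∑ X : Finset Ω, P x X * f X := by
  unfold mlext P
  apply Finset.sum_congr rfl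
  intro X _
  ring

lemma sum_insert_eq (f : Finset Ω → ℝ) (x : Ω → ℝ) (e : Ω) :
    ∑ X : Finset Ω, f (insert e X) * P x X = mlext f (Function.update x e 1) := by
  classical
  set y := Function.update x e 1 with hy
  have hRHS : mlext f y = ∑ X ∈ Finset.univ.filter (fun X : Finset Ω => e ∈ X),
      f X * ((∏ i ∈ X.erase e, x i) * ∏ i ∈ Xᶜ, (1 - x i)) := by
    unfold mlext
    rw [← Finset.sum_filter_add_sum_filter_not Finset.univ (fun X : Finset Ω => e ∈ X)]
    have hz : ∑ X ∈ Finset.univ.filter (fun X : Finset Ω => ¬ e ∈ X),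
        f X * ((∏ i ∈ X, y i) * ∏ i ∈ Xᶜ, (1 - y i)) = 0 := by
      apply Finset.sum_eq_zero
      intro X hX
      simp only [Finset.mem_filter] at hX
      have he : e ∈ Xᶜ := Finset.mem_compl.2 hX.2
      have h0 : ∏ i ∈ Xᶜ, (1 - y i) = 0 :=
        Finset.prod_eq_zero he (by simp [hy])
      rw [h0]; ring
    rw [hz, add_zero]
    apply Finset.sum_congr rfl
    intro X hX
    simp only [Finset.mem_filter] at hX
    have h1 : ∏ i ∈ X, y i = ∏ i ∈ X.erase e, x i := by
      rw [hy, Finset.prod_update_of_mem hX.2, one_mul, Finset.sdiff_singleton_eq_erase]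
    have h2 : ∏ i ∈ Xᶜ, (1 - y i) = ∏ i ∈ Xᶜ, (1 - x i) := by
      apply Finset.prod_congr rfl
      intro i hi
      have hne : i ≠ e := by
        intro h; subst h; exact (Finset.mem_compl.1 hi) hX.2
      rw [hy, Function.update_of_ne hne]
    rw [h1, h2]
  rw [hRHS, ← Finset.sum_filter_add_sum_filter_not Finset.univ (fun X : Finset Ω => e ∈ X)
    (fun X => f (insert e X) * P x X)]
  have hreindex : ∑ X ∈ Finset.univ.filter (fun X : Finset Ω => ¬ e ∈ X),
      f (insert e X) * P x X
      = ∑ S ∈ Finset.univ.filter (fun S : Finset Ω => e ∈ S), f S * P x (S.erase e) := by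
    refine Finset.sum_bij' (fun X _ => insert e X) (fun S _ => S.erase e) ?_ ?_ ?_ ?_ ?_ <;>
    · intro a ha
      simp only [Finset.mem_filter, Finset.mem_univ, true_and] at ha ⊢
      simp_all [Finset.erase_insert, Finset.insert_erase]
  rw [hreindex, ← Finset.sum_add_distrib]
  apply Finset.sum_congr rfl
  intro S hS
  simp only [Finset.mem_filter] at hS
  have h1 : insert e S = S := Finset.insert_eq_self.2 hS.2
  rw [h1, ← mul_add, P_add_erase x e S hS.2]

lemma joinOne_eq_update (x : Ω → ℝ) (hx : ∀ i, x i ∈ Set.Icc (0:ℝ) 1) (e : Ω) :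
    joinOne x e = Function.update x e 1 := by
  funext i
  unfold joinOne
  by_cases h : i = e
  · subst h; simp [max_eq_right (hx i).2]
  · simp [Function.update_of_ne h, h, max_eq_left (hx i).1]

lemma mlmarg_eq (f : Finset Ω → ℝ) (x : Ω → ℝ) (hx : ∀ i, x i ∈ Set.Icc (0:ℝ) 1) (e : Ω) :
    mlmarg f x e = ∑ X : Finset Ω, P x X * (f (insert e X) - f X) := by
  unfold mlmarg
  rw [joinOne_eq_update x hx e, ← sum_insert_eq f x e, mlext_eq_P,
    ← Finset.sum_sub_distrib]
  apply Finset.sum_congr rfl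
  intro X _
  ring

lemma pointwise (f : Finset Ω → ℝ) (hmono : MonotoneSet f) (hsub : Submodular f)
    (V X : Finset Ω) :
    f V ≤ f X + ∑ e ∈ V, (f (insert e X) - f X) := by
  have key : ∀ W : Finset Ω, f (W ∪ X) ≤ f X + ∑ e ∈ W, (f (insert e X) - f X) := by
    intro W
    induction W using Finset.induction with
    | empty => simp
    | @insert a W' ha ih =>
      rw [Finset.sum_insert ha, Finset.insert_union]
      by_cases haX : a ∈ X
      · have h1 : insert a (W' ∪ X) = W' ∪ X := by
          rw [Finset.insert_eq_self]; exact Finset.mem_union_right _ haX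
        have h2 : insert a X = X := Finset.insert_eq_self.2 haX
        rw [h1, h2]
        linarith
      · have hnotin : a ∉ W' ∪ X := by
          simp [Finset.mem_union, ha, haX]
        have hsubm := hsub X (W' ∪ X) a Finset.subset_union_right hnotin
        linarith
  calc f V ≤ f (V ∪ X) := hmono V (V ∪ X) Finset.subset_union_left
    _ ≤ _ := key V

end MLAux

/-- For monotone submodular `f`, `f(V) ≤ F(x) + Σ_{e∈V} F(e|x)`. -/
theorem setValue_le_mlext_add_marginals {Ω : Type*} [Fintype Ω] [DecidableEq Ω]
    (f : Finset Ω → ℝ) (hfnn : ∀ X, 0 ≤ f X)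
    (hmono : MonotoneSet f) (hsub : Submodular f)
    (x : Ω → ℝ) (hx : ∀ i, x i ∈ Set.Icc (0 : ℝ) 1) (V : Finset Ω) :
    f V ≤ mlext f x + ∑ e ∈ V, mlmarg f x e := by
  classical
  open MLAux in
  calc f V = ∑ X : Finset Ω, P x X * f V := by
        rw [← Finset.sum_mul, P_sum, one_mul]
    _ ≤ ∑ X : Finset Ω, P x X * (f X + ∑ e ∈ V, (f (insert e X) - f X)) := by
        apply Finset.sum_le_sum
        intro X _
        exact mul_le_mul_of_nonneg_left (pointwise f hmono hsub V X) (P_nonneg x hx X)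
    _ = ∑ X : Finset Ω, P x X * f X
        + ∑ X : Finset Ω, ∑ e ∈ V, P x X * (f (insert e X) - f X) := by
        rw [← Finset.sum_add_distrib]
        apply Finset.sum_congr rfl
        intro X _
        rw [mul_add, Finset.mul_sum]
    _ = mlext f x + ∑ e ∈ V, mlmarg f x e := by
        rw [← mlext_eq_P, Finset.sum_comm]
        congr 1
        apply Finset.sum_congr rfl
        intro e _
        rw [mlmarg_eq f x hx e]
end

section
/- Let f : 2^Ω → ℝ≥0 be monotone submodular with multilinear extension F, let {β_V}_{V∈𝒮} be nonnegative weights over a finite family 𝒮 of subsets with Σ_V β_V ≤ 1, and suppose γ ≤ Σ_{V∈𝒮} β_V f(V). Then for any x ∈ [0,1]^Ω, γ ≤ F(x) + Σ_{e∈Ω} v(e) · F(e|x), where v(e) = Σ_{V∈𝒮 : e∈V} β_V. -/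
section Aux

open Finset

variable {Ω : Type*} [Fintype Ω] [DecidableEq Ω]

/-- The product weight of a set. -/
noncomputable def wt (x : Ω → ℝ) (X : Finset Ω) : ℝ :=
  (∏ i ∈ X, x i) * ∏ i ∈ Xᶜ, (1 - x i)

lemma mlext_eq_wt (f : Finset Ω → ℝ) (x : Ω → ℝ) :
    mlext f x = ∑ X : Finset Ω, f X * wt x X := rfl

lemma wt_nonneg (x : Ω → ℝ) (hx : ∀ i, x i ∈ Set.Icc (0:ℝ) 1) (X : Finset Ω) :
    0 ≤ wt x X :=
  mul_nonneg (Finset.prod_nonneg fun i _ => (hx i).1)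
    (Finset.prod_nonneg fun i _ => by have := (hx i).2; linarith)

lemma wt_sum_one (x : Ω → ℝ) : ∑ X : Finset Ω, wt x X = 1 := by
  classical
  have h := Finset.prod_add x (fun i => 1 - x i) (Finset.univ : Finset Ω)
  have h1 : ∀ i : Ω, x i + (1 - x i) = 1 := fun i => by ring
  simp only [h1, Finset.prod_const_one, Finset.powerset_univ] at h
  rw [h]
  apply Finset.sum_congr rfl
  intro X _
  rw [wt, Finset.compl_eq_univ_sdiff]

lemma mlext_nonneg (f : Finset Ω → ℝ) (hfnn : ∀ X, 0 ≤ f X)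
    (x : Ω → ℝ) (hx : ∀ i, x i ∈ Set.Icc (0:ℝ) 1) : 0 ≤ mlext f x := by
  rw [mlext_eq_wt]
  exact Finset.sum_nonneg fun X _ => mul_nonneg (hfnn X) (wt_nonneg x hx X)

lemma mlext_joinOne (f : Finset Ω → ℝ) (x : Ω → ℝ)
    (hx : ∀ i, x i ∈ Set.Icc (0:ℝ) 1) (e : Ω) :
    mlext f (joinOne x e) = ∑ X : Finset Ω, f (insert e X) * wt x X := by
  classical
  have hye : joinOne x e e = 1 := by
    simp only [joinOne, if_pos rfl]
    exact max_eq_right (hx e).2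
  have hyne : ∀ i, i ≠ e → joinOne x e i = x i := by
    intro i hi
    simp only [joinOne, if_neg hi]
    exact max_eq_left (hx i).1
  have hL : mlext f (joinOne x e) =
      ∑ X ∈ univ.filter (fun X : Finset Ω => e ∈ X),
        f X * ((∏ i ∈ X.erase e, x i) * ∏ i ∈ Xᶜ, (1 - x i)) := by
    rw [mlext, ← Finset.sum_filter_add_sum_filter_not univ (fun X : Finset Ω => e ∈ X)]
    have h2 : ∑ X ∈ univ.filter (fun X : Finset Ω => ¬ e ∈ X),
        f X * ((∏ i ∈ X, joinOne x e i) * ∏ i ∈ Xᶜ, (1 - joinOne x e i)) = 0 := by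
      apply Finset.sum_eq_zero
      intro X hX
      rw [Finset.mem_filter] at hX
      have he : e ∈ Xᶜ := Finset.mem_compl.2 hX.2
      have hz : ∏ i ∈ Xᶜ, (1 - joinOne x e i) = 0 :=
        Finset.prod_eq_zero he (by rw [hye]; ring)
      rw [hz]; ring
    rw [h2, add_zero]
    apply Finset.sum_congr rfl
    intro X hX
    rw [Finset.mem_filter] at hX
    have h3 : ∏ i ∈ X, joinOne x e i = ∏ i ∈ X.erase e, x i := by
      rw [← Finset.mul_prod_erase X _ hX.2, hye, one_mul]
      exact Finset.prod_congr rfl fun i hi => hyne i (Finset.ne_of_mem_erase hi)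
    have h4 : ∏ i ∈ Xᶜ, (1 - joinOne x e i) = ∏ i ∈ Xᶜ, (1 - x i) :=
      Finset.prod_congr rfl fun i hi => by
        rw [hyne i (by rintro rfl; exact (Finset.mem_compl.1 hi) hX.2)]
    rw [h3, h4]
  have hR : ∑ X : Finset Ω, f (insert e X) * wt x X =
      ∑ X ∈ univ.filter (fun X : Finset Ω => e ∈ X),
        f X * ((∏ i ∈ X.erase e, x i) * ∏ i ∈ Xᶜ, (1 - x i)) := by
    rw [← Finset.sum_filter_add_sum_filter_not univ (fun X : Finset Ω => e ∈ X)]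
    have hA : ∑ X ∈ univ.filter (fun X : Finset Ω => e ∈ X), f (insert e X) * wt x X
        = ∑ X ∈ univ.filter (fun X : Finset Ω => e ∈ X),
            f X * ((x e * ∏ i ∈ X.erase e, x i) * ∏ i ∈ Xᶜ, (1 - x i)) := by
      apply Finset.sum_congr rfl
      intro X hX
      rw [Finset.mem_filter] at hX
      rw [Finset.insert_eq_self.2 hX.2, wt, ← Finset.mul_prod_erase X x hX.2]
    have hB : ∑ X ∈ univ.filter (fun X : Finset Ω => ¬ e ∈ X), f (insert e X) * wt x X
        = ∑ X ∈ univ.filter (fun X : Finset Ω => e ∈ X),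
            f X * ((∏ i ∈ X.erase e, x i) * ((1 - x e) * ∏ i ∈ Xᶜ, (1 - x i))) := by
      apply Finset.sum_nbij' (i := fun X => insert e X) (j := fun X => X.erase e)
      · intro X hX
        rw [Finset.mem_filter] at hX ⊢
        exact ⟨Finset.mem_univ _, Finset.mem_insert_self e X⟩
      · intro X hX
        rw [Finset.mem_filter] at hX ⊢
        exact ⟨Finset.mem_univ _, Finset.notMem_erase e X⟩
      · intro X hX
        rw [Finset.mem_filter] at hX
        exact Finset.erase_insert hX.2
      · intro X hX
        rw [Finset.mem_filter] at hX
        exact Finset.insert_erase hX.2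
      · intro X hX
        rw [Finset.mem_filter] at hX
        have h5 : (insert e X).erase e = X := Finset.erase_insert hX.2
        have h6 : (insert e X)ᶜ = Xᶜ.erase e := Finset.compl_insert
        have h7 : ∏ i ∈ Xᶜ, (1 - x i)
            = (1 - x e) * ∏ i ∈ Xᶜ.erase e, (1 - x i) :=
          (Finset.mul_prod_erase Xᶜ _ (Finset.mem_compl.2 hX.2)).symm
        rw [wt, h5, h6, h7]
    rw [hA, hB, ← Finset.sum_add_distrib]
    apply Finset.sum_congr rfl
    intro X _
    ring
  rw [hL, hR]

lemma mlmarg_eq_wt (f : Finset Ω → ℝ) (x : Ω → ℝ)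
    (hx : ∀ i, x i ∈ Set.Icc (0:ℝ) 1) (e : Ω) :
    mlmarg f x e = ∑ X : Finset Ω, (f (insert e X) - f X) * wt x X := by
  rw [mlmarg, mlext_joinOne f x hx e, mlext_eq_wt, ← Finset.sum_sub_distrib]
  apply Finset.sum_congr rfl
  intro X _
  ring

lemma union_bound (f : Finset Ω → ℝ) (hsub : Submodular f)
    (x : Ω → ℝ) (hx : ∀ i, x i ∈ Set.Icc (0:ℝ) 1) (A : Finset Ω) :
    ∑ X : Finset Ω, f (X ∪ A) * wt x X ≤ mlext f x + ∑ e ∈ A, mlmarg f x e := by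
  classical
  induction A using Finset.induction_on with
  | empty => simp [mlext_eq_wt]
  | @insert a A ha ih =>
    have key : ∑ X : Finset Ω, f (X ∪ insert a A) * wt x X ≤
        (∑ X : Finset Ω, f (X ∪ A) * wt x X) + mlmarg f x a := by
      rw [mlmarg_eq_wt f x hx a, ← Finset.sum_add_distrib]
      apply Finset.sum_le_sum
      intro X _
      have hw := wt_nonneg x hx X
      have hmarg : f (X ∪ insert a A) - f (X ∪ A) ≤ f (insert a X) - f X := by
        rw [Finset.union_insert]
        by_cases haX : a ∈ X
        · rw [Finset.insert_eq_self.2 (Finset.mem_union_left A haX),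
            Finset.insert_eq_self.2 haX]
          simp
        · exact hsub X (X ∪ A) a Finset.subset_union_left
            (by simp [haX, ha])
      nlinarith [mul_le_mul_of_nonneg_right hmarg hw]
    have h8 := Finset.sum_insert (f := fun e => mlmarg f x e) ha
    calc ∑ X : Finset Ω, f (X ∪ insert a A) * wt x X
        ≤ (∑ X : Finset Ω, f (X ∪ A) * wt x X) + mlmarg f x a := key
      _ ≤ (mlext f x + ∑ e ∈ A, mlmarg f x e) + mlmarg f x a := by linarith
      _ = mlext f x + ∑ e ∈ insert a A, mlmarg f x e := by rw [h8]; ring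

lemma setval_bound (f : Finset Ω → ℝ) (hmono : MonotoneSet f) (hsub : Submodular f)
    (x : Ω → ℝ) (hx : ∀ i, x i ∈ Set.Icc (0:ℝ) 1) (V : Finset Ω) :
    f V ≤ mlext f x + ∑ e ∈ V, mlmarg f x e := by
  refine le_trans ?_ (union_bound f hsub x hx V)
  have h1 : f V = ∑ X : Finset Ω, f V * wt x X := by
    rw [← Finset.mul_sum, wt_sum_one, mul_one]
  rw [h1]
  apply Finset.sum_le_sum
  intro X _
  exact mul_le_mul_of_nonneg_right
    (hmono V (X ∪ V) Finset.subset_union_right) (wt_nonneg x hx X)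

end Aux

/-- If `γ ≤ Σ_V β_V f(V)` for nonnegative weights summing to at most 1, then for any
`x ∈ [0,1]^Ω`, `γ ≤ F(x) + Σ_e v(e)·F(e|x)` where `v(e) = Σ_{V : e∈V} β_V`. -/
theorem improving_direction {Ω : Type*} [Fintype Ω] [DecidableEq Ω]
    (f : Finset Ω → ℝ) (hfnn : ∀ X, 0 ≤ f X)
    (hmono : MonotoneSet f) (hsub : Submodular f)
    (𝒮 : Finset (Finset Ω)) (β : Finset Ω → ℝ)
    (hβ : ∀ V ∈ 𝒮, 0 ≤ β V) (hβ1 : ∑ V ∈ 𝒮, β V ≤ 1)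
    (γ : ℝ) (hγ : γ ≤ ∑ V ∈ 𝒮, β V * f V)
    (x : Ω → ℝ) (hx : ∀ i, x i ∈ Set.Icc (0 : ℝ) 1) :
    γ ≤ mlext f x +
      ∑ e : Ω, (∑ V ∈ 𝒮.filter (fun V => e ∈ V), β V) * mlmarg f x e := by
  classical
  have h1 : γ ≤ ∑ V ∈ 𝒮, β V * (mlext f x + ∑ e ∈ V, mlmarg f x e) :=
    hγ.trans (Finset.sum_le_sum fun V hV =>
      mul_le_mul_of_nonneg_left (setval_bound f hmono hsub x hx V) (hβ V hV))
  have h2 : ∑ V ∈ 𝒮, β V * (mlext f x + ∑ e ∈ V, mlmarg f x e)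
      = (∑ V ∈ 𝒮, β V) * mlext f x + ∑ V ∈ 𝒮, β V * ∑ e ∈ V, mlmarg f x e := by
    rw [Finset.sum_mul, ← Finset.sum_add_distrib]
    apply Finset.sum_congr rfl
    intro V _
    ring
  have hswap : ∑ V ∈ 𝒮, β V * ∑ e ∈ V, mlmarg f x e
      = ∑ e : Ω, (∑ V ∈ 𝒮.filter (fun V => e ∈ V), β V) * mlmarg f x e := by
    have hV : ∀ V : Finset Ω, β V * ∑ e ∈ V, mlmarg f x e
        = ∑ e : Ω, (if e ∈ V then β V * mlmarg f x e else 0) := by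
      intro V
      rw [Finset.mul_sum]
      rw [Finset.sum_ite_mem Finset.univ V (fun e => β V * mlmarg f x e),
        Finset.univ_inter]
    simp only [hV]
    rw [Finset.sum_comm]
    apply Finset.sum_congr rfl
    intro e _
    rw [Finset.sum_mul, Finset.sum_filter]
  have hF : 0 ≤ mlext f x := mlext_nonneg f hfnn x hx
  have h3 : (∑ V ∈ 𝒮, β V) * mlext f x ≤ mlext f x :=
    mul_le_of_le_one_left hF hβ1
  linarith [h1, h2, h3, hswap]
end
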